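/- arXiv:2503.20717 — 4 statements merged into one kernel-verified Lean document; each statement's English description precedes it below -/
import Mathlib

section
/- Let H1 be an r1 × n1 matrix over 𝔽₂ and H2 an r2 × n2 matrix over 𝔽₂. Define the hypergraph product check matrices H_X = [H1 ⊗ I_{n2} | I_{r1} ⊗ H2ᵀ] (an r1·n2 × (n1·n2 + r1·r2) matrix) and H_Z = [I_{n1} ⊗ H2 | H1ᵀ ⊗ I_{r2}] (an n1·r2 × (n1·n2 + r1·r2) matrix), where ⊗ denotes the Kronecker product. Then H_X · H_Zᵀ = 0 over 𝔽₂, i.e., the X-type and Z-type checks of the hypergraph product code commute. -/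
open Matrix
open scoped Kronecker

/-- The X-type check matrix of the hypergraph product code:
`H_X = [H1 ⊗ I_{n2} | I_{r1} ⊗ H2ᵀ]`. -/
def hgpX {r1 n1 r2 n2 : ℕ}
    (H1 : Matrix (Fin r1) (Fin n1) (ZMod 2)) (H2 : Matrix (Fin r2) (Fin n2) (ZMod 2)) :
    Matrix (Fin r1 × Fin n2) ((Fin n1 × Fin n2) ⊕ (Fin r1 × Fin r2)) (ZMod 2) :=
  Matrix.fromCols (H1 ⊗ₖ (1 : Matrix (Fin n2) (Fin n2) (ZMod 2)))
    ((1 : Matrix (Fin r1) (Fin r1) (ZMod 2)) ⊗ₖ H2ᵀ)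

/-- The Z-type check matrix of the hypergraph product code:
`H_Z = [I_{n1} ⊗ H2 | H1ᵀ ⊗ I_{r2}]`. -/
def hgpZ {r1 n1 r2 n2 : ℕ}
    (H1 : Matrix (Fin r1) (Fin n1) (ZMod 2)) (H2 : Matrix (Fin r2) (Fin n2) (ZMod 2)) :
    Matrix (Fin n1 × Fin r2) ((Fin n1 × Fin n2) ⊕ (Fin r1 × Fin r2)) (ZMod 2) :=
  Matrix.fromCols ((1 : Matrix (Fin n1) (Fin n1) (ZMod 2)) ⊗ₖ H2)
    (H1ᵀ ⊗ₖ (1 : Matrix (Fin r2) (Fin r2) (ZMod 2)))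

/-!
Each block of `H_X · H_Zᵀ` is a product of two Kronecker products, one factor of each being an
identity, so both blocks equal `H1 ⊗ H2ᵀ`. Their sum `2 • (H1 ⊗ H2ᵀ)` vanishes in characteristic 2.
-/

namespace Matrix

variable {R l m n p q : Type*} [CommSemiring R]

theorem kronecker_one_mul_one_kronecker [Fintype m] [Fintype n] [DecidableEq m] [DecidableEq n]
    (A : Matrix l m R) (B : Matrix n p R) :
    A ⊗ₖ (1 : Matrix n n R) * (1 : Matrix m m R) ⊗ₖ B = A ⊗ₖ B := by
  rw [← mul_kronecker_mul, Matrix.mul_one, Matrix.one_mul]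

theorem one_kronecker_mul_kronecker_one [Fintype l] [Fintype p] [DecidableEq l] [DecidableEq p]
    (A : Matrix l m R) (B : Matrix n p R) :
    (1 : Matrix l l R) ⊗ₖ B * A ⊗ₖ (1 : Matrix p p R) = A ⊗ₖ B := by
  rw [← mul_kronecker_mul, Matrix.mul_one, Matrix.one_mul]

theorem transpose_one_kronecker [DecidableEq l] (B : Matrix m n R) :
    ((1 : Matrix l l R) ⊗ₖ B)ᵀ = (1 : Matrix l l R) ⊗ₖ Bᵀ := by
  rw [← kroneckerMap_transpose, transpose_one]

theorem transpose_kronecker_one [DecidableEq n] (A : Matrix l m R) :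
    (A ⊗ₖ (1 : Matrix n n R))ᵀ = Aᵀ ⊗ₖ (1 : Matrix n n R) := by
  rw [← kroneckerMap_transpose, transpose_one]

theorem hypergraphProduct_mul_transpose [Fintype m] [Fintype n] [Fintype p] [Fintype q]
    [DecidableEq m] [DecidableEq n] [DecidableEq p] [DecidableEq q]
    (A : Matrix m n R) (B : Matrix p q R) :
    fromCols (A ⊗ₖ (1 : Matrix q q R)) ((1 : Matrix m m R) ⊗ₖ Bᵀ) *
        (fromCols ((1 : Matrix n n R) ⊗ₖ B) (Aᵀ ⊗ₖ (1 : Matrix p p R)))ᵀ =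
      A ⊗ₖ Bᵀ + A ⊗ₖ Bᵀ := by
  rw [transpose_fromCols, fromCols_mul_fromRows, transpose_one_kronecker,
    transpose_kronecker_one, transpose_transpose, kronecker_one_mul_one_kronecker,
    one_kronecker_mul_kronecker_one]

theorem hypergraphProduct_mul_transpose_eq_zero [CharP R 2]
    [Fintype m] [Fintype n] [Fintype p] [Fintype q]
    [DecidableEq m] [DecidableEq n] [DecidableEq p] [DecidableEq q]
    (A : Matrix m n R) (B : Matrix p q R) :
    fromCols (A ⊗ₖ (1 : Matrix q q R)) ((1 : Matrix m m R) ⊗ₖ Bᵀ) *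
        (fromCols ((1 : Matrix n n R) ⊗ₖ B) (Aᵀ ⊗ₖ (1 : Matrix p p R)))ᵀ = 0 := by
  rw [hypergraphProduct_mul_transpose]
  ext i j
  exact CharTwo.add_self_eq_zero _

end Matrix

/-- The X-type and Z-type checks of the hypergraph product code commute:
`H_X · H_Zᵀ = 0` over 𝔽₂. -/
theorem hgp_checks_commute {r1 n1 r2 n2 : ℕ}
    (H1 : Matrix (Fin r1) (Fin n1) (ZMod 2)) (H2 : Matrix (Fin r2) (Fin n2) (ZMod 2)) :
    hgpX H1 H2 * (hgpZ H1 H2)ᵀ = 0 :=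
  hypergraphProduct_mul_transpose_eq_zero H1 H2
end

section
/- Let H1 be an r1 × n1 matrix over 𝔽₂ and H2 an r2 × n2 matrix over 𝔽₂, with hypergraph product check matrices H_X = [H1 ⊗ I_{n2} | I_{r1} ⊗ H2ᵀ] and H_Z = [I_{n1} ⊗ H2 | H1ᵀ ⊗ I_{r2}]. Then rank(H_X) = n2·rank(H1) + r1·rank(H2) − rank(H1)·rank(H2) and rank(H_Z) = n1·rank(H2) + r2·rank(H1) − rank(H1)·rank(H2), where rank is the rank of a matrix over 𝔽₂. -/
open Matrix
open scoped Kronecker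

/-!
Identify `a × c → K` with `(a → K) ⊗ (c → K)`. The column space of `[A ⊗ I | I ⊗ C]` then becomes
`range (A ⊗ id) ⊔ range (id ⊗ C)`, and by right exactness of the tensor product this is the kernel
of the surjection `q_A ⊗ q_C` onto `(K^a ⧸ range A) ⊗ (K^c ⧸ range C)`, where `q_A`, `q_C` are the
quotient maps. Its dimension is therefore `|a| |c| - (|a| - rank A) (|c| - rank C)`.
-/

open Module LinearMap TensorProduct

variable {K : Type*} [Field K]

theorem finrank_range_rTensor_sup_range_lTensor {M N M' N' : Type*}
    [AddCommGroup M] [Module K M] [AddCommGroup N] [Module K N] [FiniteDimensional K N]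
    [AddCommGroup M'] [Module K M'] [AddCommGroup N'] [Module K N'] [FiniteDimensional K N']
    (f : M →ₗ[K] N) (g : M' →ₗ[K] N') :
    finrank K ↥(range (rTensor N' f) ⊔ range (lTensor N g)) +
        finrank K (N ⧸ range f) * finrank K (N' ⧸ range g) = finrank K N * finrank K N' := by
  set q := map (range f).mkQ (range g).mkQ
  have hker : range (rTensor N' f) ⊔ range (lTensor N g) = ker q := by
    rw [TensorProduct.map_ker f.exact_map_mkQ_range (range f).mkQ_surjective
      g.exact_map_mkQ_range (range g).mkQ_surjective, sup_comm]
  have hsurj : range q = ⊤ :=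
    range_eq_top.mpr (map_surjective (range f).mkQ_surjective (range g).mkQ_surjective)
  calc _ = finrank K (range q) + finrank K (ker q) := by
          rw [hker, hsurj, finrank_top, finrank_tensorProduct, add_comm]
    _ = finrank K N * finrank K N' := by
          rw [finrank_range_add_finrank_ker, finrank_tensorProduct]

theorem toLin_fromCols {m n n' : Type*} [Fintype m] [Fintype n] [Fintype n'] [DecidableEq n]
    [DecidableEq n'] {N M M' : Type*} [AddCommGroup N] [Module K N] [AddCommGroup M] [Module K M]
    [AddCommGroup M'] [Module K M'] (u : Basis m K N) (v : Basis n K M) (v' : Basis n' K M')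
    (A : Matrix m n K) (B : Matrix m n' K) :
    toLin (v.prod v') u (fromCols A B) = (toLin v u A).coprod (toLin v' u B) := by
  apply (v.prod v').ext
  rintro (j | j) <;> rw [toLin_self] <;> simp

theorem rank_fromCols_comm {m n n' : Type*} [Fintype n] [Fintype n'] {R : Type*} [CommSemiring R]
    (A : Matrix m n R) (B : Matrix m n' R) : (fromCols A B).rank = (fromCols B A).rank := by
  rw [← rank_submatrix (fromCols A B) (Equiv.refl m) (Equiv.sumComm n' n)]
  congr 1
  ext i (j | j) <;> rfl

theorem rank_fromCols_kronecker_one_one_kronecker {a b c d : Type*} [Fintype a] [Fintype b]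
    [Fintype c] [Fintype d] [DecidableEq a] [DecidableEq b] [DecidableEq c] [DecidableEq d]
    (A : Matrix a b K) (C : Matrix c d K) :
    (fromCols (A ⊗ₖ (1 : Matrix c c K)) ((1 : Matrix a a K) ⊗ₖ C)).rank =
      Fintype.card c * A.rank + Fintype.card a * C.rank - A.rank * C.rank := by
  have hcodim : (fromCols (A ⊗ₖ (1 : Matrix c c K)) ((1 : Matrix a a K) ⊗ₖ C)).rank +
      (Fintype.card a - A.rank) * (Fintype.card c - C.rank) =
      Fintype.card a * Fintype.card c := by
    set ea := Pi.basisFun K a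
    set eb := Pi.basisFun K b
    set ec := Pi.basisFun K c
    set ed := Pi.basisFun K d
    rw [rank_eq_finrank_range_toLin _ (ea.tensorProduct ec) ((eb.tensorProduct ec).prod
      (ea.tensorProduct ed)), toLin_fromCols, toLin_kronecker, toLin_kronecker, toLin_one,
      toLin_one, range_coprod, rank_eq_finrank_range_toLin A ea eb,
      rank_eq_finrank_range_toLin C ec ed, ← finrank_fintype_fun_eq_card (η := a) K,
      ← finrank_fintype_fun_eq_card (η := c) K, ← Submodule.finrank_quotient,
      ← Submodule.finrank_quotient]
    exact finrank_range_rTensor_sup_range_lTensor _ _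
  obtain ⟨s, hs⟩ := Nat.exists_eq_add_of_le A.rank_le_card_height
  obtain ⟨t, ht⟩ := Nat.exists_eq_add_of_le C.rank_le_card_height
  rw [hs, ht, Nat.add_sub_cancel_left, Nat.add_sub_cancel_left] at hcodim
  rw [hs, ht]
  apply Nat.eq_sub_of_add_eq
  linarith

/-- Ranks of the hypergraph product check matrices:
`rank(H_X) = n2·rank(H1) + r1·rank(H2) − rank(H1)·rank(H2)` and
`rank(H_Z) = n1·rank(H2) + r2·rank(H1) − rank(H1)·rank(H2)`. -/
theorem hgp_rank {r1 n1 r2 n2 : ℕ}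
    (H1 : Matrix (Fin r1) (Fin n1) (ZMod 2)) (H2 : Matrix (Fin r2) (Fin n2) (ZMod 2)) :
    (hgpX H1 H2).rank = n2 * H1.rank + r1 * H2.rank - H1.rank * H2.rank ∧
    (hgpZ H1 H2).rank = n1 * H2.rank + r2 * H1.rank - H1.rank * H2.rank := by
  constructor
  · rw [hgpX, rank_fromCols_kronecker_one_one_kronecker, rank_transpose, Fintype.card_fin,
      Fintype.card_fin]
  · rw [hgpZ, rank_fromCols_comm, rank_fromCols_kronecker_one_one_kronecker, rank_transpose,
      Fintype.card_fin, Fintype.card_fin, add_comm]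
end

section
/- Let H1 be an r1 × n1 matrix over 𝔽₂ and H2 an r2 × n2 matrix over 𝔽₂, with H_X = [H1 ⊗ I_{n2} | I_{r1} ⊗ H2ᵀ]. Then the Hamming weight of the row of H_X indexed by the pair (i, c) with i ∈ Fin r1 and c ∈ Fin n2 equals the Hamming weight of row i of H1 plus the Hamming weight of column c of H2. In particular, the maximum row weight of H_X equals the maximum row weight of H1 plus the maximum column weight of H2. -/
open Matrix
open scoped Kronecker

/-- The Hamming weight of a vector over 𝔽₂: its number of nonzero entries. -/
def wt {ι : Type*} [Fintype ι] (v : ι → ZMod 2) : ℕ :=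
  (Finset.univ.filter fun i => v i ≠ 0).card

/-! Row `(i, c)` of `H_X` is row `(i, c)` of `H1 ⊗ I` followed by row `(i, c)` of `I ⊗ H2ᵀ`.
Over a field the support of a row of a Kronecker product is the product of the supports of the
two factor rows, and a row of the identity has weight one, so the two blocks contribute
`wt (H1 i)` and `wt (H2ᵀ c)`. The weight of row `(i, c)` is thus a function of `i` plus a function
of `c`, and its maximum over nonempty index sets is the sum of the two maxima. -/

lemma wt_sumElim {ι κ : Type*} [Fintype ι] [Fintype κ] (u : ι → ZMod 2) (v : κ → ZMod 2) :
    wt (Sum.elim u v) = wt u + wt v := by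
  simp only [wt, Finset.card_filter, Fintype.sum_sum_type]
  rfl

lemma wt_mul_apply {ι κ : Type*} [Fintype ι] [Fintype κ] (u : ι → ZMod 2) (v : κ → ZMod 2) :
    wt (fun p : ι × κ => u p.1 * v p.2) = wt u * wt v := by
  simp only [wt, ← Finset.card_product, ← Finset.filter_product, Finset.univ_product_univ,
    mul_ne_zero_iff]

lemma wt_kronecker_row {ι ι' κ κ' : Type*} [Fintype ι'] [Fintype κ']
    (A : Matrix ι ι' (ZMod 2)) (B : Matrix κ κ' (ZMod 2)) (i : ι) (k : κ) :
    wt ((A ⊗ₖ B) (i, k)) = wt (A i) * wt (B k) :=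
  wt_mul_apply (A i) (B k)

lemma wt_one_row {ι : Type*} [Fintype ι] [DecidableEq ι] (i : ι) :
    wt ((1 : Matrix ι ι (ZMod 2)) i) = 1 := by
  simp [wt, Matrix.one_apply, Finset.filter_eq]

lemma wt_hgpX_row {r1 n1 r2 n2 : ℕ}
    (H1 : Matrix (Fin r1) (Fin n1) (ZMod 2)) (H2 : Matrix (Fin r2) (Fin n2) (ZMod 2))
    (i : Fin r1) (c : Fin n2) :
    wt (hgpX H1 H2 (i, c)) = wt (H1 i) + wt (fun i2 => H2 i2 c) := by
  change wt (Sum.elim ((H1 ⊗ₖ 1) (i, c)) ((1 ⊗ₖ H2ᵀ) (i, c))) = _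
  rw [wt_sumElim, wt_kronecker_row, wt_kronecker_row, wt_one_row, wt_one_row, mul_one, one_mul]
  rfl

/-- The Hamming weight of the row of `H_X` indexed by `(i, c)` equals the Hamming weight of
row `i` of `H1` plus the Hamming weight of column `c` of `H2`; in particular the maximum
row weight of `H_X` equals the maximum row weight of `H1` plus the maximum column weight
of `H2`. -/
theorem hgpX_row_weight {r1 n1 r2 n2 : ℕ} (hr1 : 0 < r1) (hn2 : 0 < n2)
    (H1 : Matrix (Fin r1) (Fin n1) (ZMod 2)) (H2 : Matrix (Fin r2) (Fin n2) (ZMod 2)) :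
    (∀ (i : Fin r1) (c : Fin n2),
      wt (hgpX H1 H2 (i, c)) = wt (H1 i) + wt (fun i2 => H2 i2 c)) ∧
    Finset.univ.sup (fun ic : Fin r1 × Fin n2 => wt (hgpX H1 H2 ic)) =
      Finset.univ.sup (fun i : Fin r1 => wt (H1 i)) +
        Finset.univ.sup (fun c : Fin n2 => wt (fun i2 => H2 i2 c)) := by
  refine ⟨wt_hgpX_row H1 H2, ?_⟩
  have hrows : (Finset.univ : Finset (Fin r1)).Nonempty := Finset.univ_nonempty_iff.2 ⟨⟨0, hr1⟩⟩
  have hcols : (Finset.univ : Finset (Fin n2)).Nonempty := Finset.univ_nonempty_iff.2 ⟨⟨0, hn2⟩⟩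
  rw [Finset.sup_add_sup hrows hcols, Finset.univ_product_univ]
  exact congrArg _ (funext fun ic => wt_hgpX_row H1 H2 ic.1 ic.2)
end

section
/- Let H be an r × n matrix over 𝔽₂, let f : Fin r → ℝ² assign a position to each check (row) and g : Fin n → ℝ² assign a position to each bit (column), and let ρ ≥ 0. Suppose H is geometrically ρ-local, i.e., H i j ≠ 0 implies dist(f i, g j) ≤ ρ. Then the transpose code check matrix Hᵀ, with check positions g and bit positions f, is also geometrically ρ-local: Hᵀ j i ≠ 0 implies dist(g j, f i) ≤ ρ. Moreover, if additionally the check positions are δ-separated for some δ > 0 (dist(f i, f i') ≥ δ for all i ≠ i'), then every row of Hᵀ has Hamming weight at most (1 + 2ρ/δ)². -/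
/-! The balls of radius `δ/2` around `δ`-separated points are pairwise disjoint, and if the points
lie within `ρ` of a centre `c`, these balls all fit in the ball of radius `ρ + δ/2` around `c`.
Comparing Haar measures, which scale like the `d`-th power of the radius, bounds the number of
points by `((ρ + δ/2) / (δ/2))^d = (1 + 2ρ/δ)^d`. Apply this in the plane to the checks in the
support of row `j` of `Hᵀ`, which lie within `ρ` of the bit position `g j`. -/

open Matrix

open Metric MeasureTheory Module

section Packing

variable {E ι : Type*} [NormedAddCommGroup E] [NormedSpace ℝ E] [FiniteDimensional ℝ E]
  {s : Finset ι} {p : ι → E} {c : E} {ρ δ : ℝ}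

theorem card_mul_pow_le_of_pairwise_dist_le (hρ : 0 ≤ ρ) (hδ : 0 < δ)
    (hsep : (s : Set ι).Pairwise fun i j => δ ≤ dist (p i) (p j))
    (hnear : ∀ i ∈ s, dist (p i) c ≤ ρ) :
    (s.card : ℝ) * (δ / 2) ^ finrank ℝ E ≤ (ρ + δ / 2) ^ finrank ℝ E := by
  borelize E
  set μ : Measure E := Measure.addHaar
  have hδ2 : 0 < δ / 2 := half_pos hδ
  have hdisj : (s : Set ι).PairwiseDisjoint fun i => ball (p i) (δ / 2) :=
    fun i hi j hj hij => ball_disjoint_ball (by linarith [hsep hi hj hij])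
  have hsub : ⋃ i ∈ s, ball (p i) (δ / 2) ⊆ ball c (ρ + δ / 2) :=
    Set.iUnion₂_subset fun i hi x hx => mem_ball.2 <| by
      linarith [dist_triangle x (p i) c, mem_ball.1 hx, hnear i hi]
  have hunit_pos : μ (ball 0 1) ≠ 0 := (measure_ball_pos μ 0 one_pos).ne'
  have hunit_fin : μ (ball 0 1) ≠ ⊤ := measure_ball_lt_top.ne
  have hvol : (s.card : ENNReal) * ENNReal.ofReal ((δ / 2) ^ finrank ℝ E) * μ (ball 0 1) ≤
      ENNReal.ofReal ((ρ + δ / 2) ^ finrank ℝ E) * μ (ball 0 1) :=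
    calc (s.card : ENNReal) * ENNReal.ofReal ((δ / 2) ^ finrank ℝ E) * μ (ball 0 1)
        = ∑ i ∈ s, μ (ball (p i) (δ / 2)) := by
          simp only [Measure.addHaar_ball_of_pos μ _ hδ2, Finset.sum_const, nsmul_eq_mul,
            mul_assoc]
      _ = μ (⋃ i ∈ s, ball (p i) (δ / 2)) :=
          (measure_biUnion_finset hdisj fun _ _ => measurableSet_ball).symm
      _ ≤ μ (ball c (ρ + δ / 2)) := measure_mono hsub
      _ = ENNReal.ofReal ((ρ + δ / 2) ^ finrank ℝ E) * μ (ball 0 1) :=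
          Measure.addHaar_ball_of_pos μ _ (by linarith)
  rw [ENNReal.mul_le_mul_iff_left hunit_pos hunit_fin, ← ENNReal.ofReal_natCast,
    ← ENNReal.ofReal_mul (Nat.cast_nonneg _)] at hvol
  exact (ENNReal.ofReal_le_ofReal_iff (by positivity)).1 hvol

theorem card_le_one_add_two_mul_div_pow_of_pairwise_dist_le (hρ : 0 ≤ ρ) (hδ : 0 < δ)
    (hsep : (s : Set ι).Pairwise fun i j => δ ≤ dist (p i) (p j))
    (hnear : ∀ i ∈ s, dist (p i) c ≤ ρ) :
    (s.card : ℝ) ≤ (1 + 2 * ρ / δ) ^ finrank ℝ E := by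
  have hscale : (1 + 2 * ρ / δ) * (δ / 2) = ρ + δ / 2 := by field_simp; ring
  have hvol := card_mul_pow_le_of_pairwise_dist_le hρ hδ hsep hnear
  rw [← hscale, mul_pow] at hvol
  exact le_of_mul_le_mul_right hvol (by positivity)

end Packing

/-- If `H` is geometrically ρ-local with check positions `f` and bit positions `g`, then the
transpose code `Hᵀ` (checks at `g`, bits at `f`) is also geometrically ρ-local; moreover, if
the check positions are δ-separated (δ > 0), every row of `Hᵀ` has Hamming weight at most
`(1 + 2ρ/δ)²`. -/
theorem transpose_code_local {r n : ℕ}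
    (H : Matrix (Fin r) (Fin n) (ZMod 2))
    (f : Fin r → EuclideanSpace ℝ (Fin 2)) (g : Fin n → EuclideanSpace ℝ (Fin 2))
    (ρ : ℝ) (hρ : 0 ≤ ρ)
    (hloc : ∀ i j, H i j ≠ 0 → dist (f i) (g j) ≤ ρ) :
    (∀ j i, Hᵀ j i ≠ 0 → dist (g j) (f i) ≤ ρ) ∧
    ∀ δ : ℝ, 0 < δ → (∀ i i' : Fin r, i ≠ i' → δ ≤ dist (f i) (f i')) →
      ∀ j : Fin n, (wt (Hᵀ j) : ℝ) ≤ (1 + 2 * ρ / δ) ^ 2 := by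
  refine ⟨fun j i hji => dist_comm (g j) (f i) ▸ hloc i j hji, fun δ hδ hsep j => ?_⟩
  have hcard := card_le_one_add_two_mul_div_pow_of_pairwise_dist_le (c := g j) hρ hδ
    (s := Finset.univ.filter fun i => Hᵀ j i ≠ 0) (fun i _ i' _ hii' => hsep i i' hii')
    (fun i hi => hloc i j (Finset.mem_filter.1 hi).2)
  rwa [finrank_euclideanSpace_fin] at hcard
end
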